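/- arXiv:2512.05162 — 2 statements merged into one kernel-verified Lean document; each statement's English description precedes it below -/
import Mathlib

section
/- Let K be a Markov kernel on a standard Borel space (M, 𝓑(M)) satisfying the Doeblin minorization condition: there exist ε > 0 and a probability measure ν such that K(s, A) ≥ ε·ν(A) for all s ∈ M and all measurable A. Then for any two probability measures μ₁, μ₂ on M, the total variation distance between μ₁K and μ₂K satisfies ‖μ₁K − μ₂K‖_TV ≤ (1 − ε)·‖μ₁ − μ₂‖_TV. -/
/-!
For a measurable set `A`, the minorization applied to `A` and `Aᶜ` puts `s ↦ K(s, A)` in the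
interval `[ε ν(A), ε ν(A) + 1 - ε]`. On the other hand, for finite measures of equal mass,
`μ₁ + (μ₂ - μ₁) = μ₂ + (μ₁ - μ₂)` with the truncated differences `μ₁ - μ₂`, `μ₂ - μ₁` of equal
mass `μ₁(S) - μ₂(S) ≤ ‖μ₁ - μ₂‖_TV` (`S` a Hahn set). So for `f` with values in `[a, b]`, the
difference `∫ f ∂μ₁ - ∫ f ∂μ₂ = ∫ f ∂(μ₁ - μ₂) - ∫ f ∂(μ₂ - μ₁)` is at most
`(b - a) ‖μ₁ - μ₂‖_TV` in absolute value. Take `f = K(·, A)`.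
-/

open MeasureTheory ProbabilityTheory

/-- Total variation distance between two measures: the supremum over measurable
sets of the absolute difference of the measures. -/
noncomputable def tvDist {M : Type*} [MeasurableSpace M] (μ₁ μ₂ : Measure M) : ℝ :=
  ⨆ A : {A : Set M // MeasurableSet A}, |(μ₁ A).toReal - (μ₂ A).toReal|

open Set

namespace MeasureTheory.Measure

variable {α : Type*} [MeasurableSpace α] {μ ν : Measure α} [IsFiniteMeasure μ] [IsFiniteMeasure ν]

lemma add_sub_eq_add_sub : μ + (ν - μ) = ν + (μ - ν) := by
  have h := sub_toSignedMeasure_eq_toSignedMeasure_sub (μ := ν) (ν := μ)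
  rw [sub_eq_sub_iff_add_eq_add] at h
  rw [← toSignedMeasure_eq_toSignedMeasure_iff, toSignedMeasure_add, toSignedMeasure_add, h,
    add_comm]

lemma exists_measureReal_sub_univ_eq :
    ∃ s, MeasurableSet s ∧ (μ - ν).real univ = μ.real s - ν.real s := by
  obtain ⟨s, hs⟩ := exists_isHahnDecomposition ν μ
  have hνμ : ν s ≤ μ s := by simpa using Measure.le_iff'.1 hs.le_on univ
  refine ⟨s, hs.measurableSet, ?_⟩
  rw [measureReal_def, ← measure_add_measure_compl hs.measurableSet,
    sub_apply_eq_zero_of_isHahnDecomposition hs.compl, add_zero,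
    ← restrict_apply_self, restrict_sub_eq_restrict_sub_restrict hs.measurableSet,
    sub_apply hs.measurableSet hs.le_on, restrict_apply_self, restrict_apply_self,
    ENNReal.toReal_sub_of_le hνμ (measure_ne_top _ _)]
  rfl

end MeasureTheory.Measure

section TotalVariation

variable {α : Type*} [MeasurableSpace α] {μ ν : Measure α} [IsFiniteMeasure μ] [IsFiniteMeasure ν]

lemma abs_measureReal_sub_le_tvDist {A : Set α} (hA : MeasurableSet A) :
    |μ.real A - ν.real A| ≤ tvDist μ ν := by
  refine le_ciSup (f := fun A : {A : Set α // MeasurableSet A} => |μ.real A - ν.real A|)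
    ⟨μ.real univ + ν.real univ, ?_⟩ ⟨A, hA⟩
  rintro _ ⟨B, rfl⟩
  exact abs_sub_le_of_nonneg_of_le measureReal_nonneg
    ((measureReal_mono (subset_univ _)).trans (le_add_of_nonneg_right measureReal_nonneg))
    measureReal_nonneg
    ((measureReal_mono (subset_univ _)).trans (le_add_of_nonneg_left measureReal_nonneg))

lemma measureReal_sub_univ_le_tvDist : (μ - ν).real univ ≤ tvDist μ ν := by
  obtain ⟨s, hs, hμν⟩ := Measure.exists_measureReal_sub_univ_eq (μ := μ) (ν := ν)
  exact hμν ▸ (le_abs_self _).trans (abs_measureReal_sub_le_tvDist hs)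

lemma integral_mem_Icc_of_forall_mem_Icc {f : α → ℝ} {a b : ℝ} (hf : Measurable f)
    (hfab : ∀ x, f x ∈ Icc a b) :
    ∫ x, f x ∂μ ∈ Icc (μ.real univ * a) (μ.real univ * b) := by
  have hfi : Integrable f μ := .of_mem_Icc a b hf.aemeasurable (.of_forall hfab)
  constructor
  · simpa using integral_mono (integrable_const a) hfi fun x => (hfab x).1
  · simpa using integral_mono hfi (integrable_const b) fun x => (hfab x).2

lemma abs_integral_sub_integral_le_mul_tvDist (hμν : μ univ = ν univ) {f : α → ℝ} {a b : ℝ}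
    (hf : Measurable f) (hab : a ≤ b) (hfab : ∀ x, f x ∈ Icc a b) :
    |∫ x, f x ∂μ - ∫ x, f x ∂ν| ≤ (b - a) * tvDist μ ν := by
  have hsplit : μ + (ν - μ) = ν + (μ - ν) := Measure.add_sub_eq_add_sub
  have hmass : (ν - μ).real univ = (μ - ν).real univ := by
    have := congrArg (· univ) hsplit
    rw [Measure.add_apply, Measure.add_apply, hμν] at this
    rw [measureReal_def, (ENNReal.add_right_inj (measure_ne_top ν univ)).1 this]
    rfl
  have hint : ∫ x, f x ∂μ + ∫ x, f x ∂(ν - μ) = ∫ x, f x ∂ν + ∫ x, f x ∂(μ - ν) := by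
    have hfi : ∀ ρ : Measure α, [IsFiniteMeasure ρ] → Integrable f ρ :=
      fun _ _ => .of_mem_Icc a b hf.aemeasurable (.of_forall hfab)
    rw [← integral_add_measure (hfi _) (hfi _), ← integral_add_measure (hfi _) (hfi _), hsplit]
  obtain ⟨h₁, h₂⟩ := integral_mem_Icc_of_forall_mem_Icc (μ := μ - ν) hf hfab
  obtain ⟨h₃, h₄⟩ := integral_mem_Icc_of_forall_mem_Icc (μ := ν - μ) hf hfab
  rw [hmass] at h₃ h₄
  calc |∫ x, f x ∂μ - ∫ x, f x ∂ν| ≤ (b - a) * (μ - ν).real univ := by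
        rw [abs_le]; constructor <;> nlinarith
    _ ≤ (b - a) * tvDist μ ν :=
        mul_le_mul_of_nonneg_left measureReal_sub_univ_le_tvDist (sub_nonneg.2 hab)

end TotalVariation

namespace ProbabilityTheory.Kernel

variable {α β : Type*} [MeasurableSpace α] [MeasurableSpace β]

lemma measureReal_bind_eq_integral (κ : Kernel α β) [IsFiniteKernel κ] (μ : Measure α)
    {A : Set β} (hA : MeasurableSet A) :
    (μ.bind κ).real A = ∫ x, (κ x).real A ∂μ := by
  simp only [measureReal_def]
  rw [Measure.bind_apply hA κ.aemeasurable,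
    integral_toReal (κ.measurable_coe hA).aemeasurable (.of_forall fun x => measure_lt_top _ _)]

lemma measureReal_mem_Icc_of_minorization (κ : Kernel α β) [IsMarkovKernel κ]
    {ν : Measure β} [IsProbabilityMeasure ν] {ε : ℝ} (hε : 0 ≤ ε)
    (hκ : ∀ x A, MeasurableSet A → ENNReal.ofReal ε * ν A ≤ κ x A) (x : α)
    {A : Set β} (hA : MeasurableSet A) :
    (κ x).real A ∈ Icc (ε * ν.real A) (ε * ν.real A + (1 - ε)) := by
  have hmin : ∀ B, MeasurableSet B → ε * ν.real B ≤ (κ x).real B := fun B hB => by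
    have := ENNReal.toReal_mono (measure_ne_top _ _) (hκ x B hB)
    rwa [ENNReal.toReal_mul, ENNReal.toReal_ofReal hε] at this
  have hcompl := hmin Aᶜ hA.compl
  rw [probReal_compl_eq_one_sub hA, probReal_compl_eq_one_sub hA] at hcompl
  exact ⟨hmin A hA, by linarith⟩

end ProbabilityTheory.Kernel

theorem doeblin_tv_contraction_general
    {M : Type*} [MeasurableSpace M]
    (K : Kernel M M) [IsMarkovKernel K]
    (ε : ℝ) (hε : 0 < ε)
    (ν : Measure M) [IsProbabilityMeasure ν]
    (hdoeblin : ∀ s : M, ∀ A : Set M, MeasurableSet A →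
      ENNReal.ofReal ε * ν A ≤ K s A)
    (μ₁ μ₂ : Measure M) [IsProbabilityMeasure μ₁] [IsProbabilityMeasure μ₂] :
    tvDist (μ₁.bind (fun s => K s)) (μ₂.bind (fun s => K s))
      ≤ (1 - ε) * tvDist μ₁ μ₂ := by
  have hK := K.measureReal_mem_Icc_of_minorization hε.le hdoeblin
  have hε₁ : ε ≤ 1 := by
    obtain ⟨s⟩ := μ₁.nonempty_of_neZero
    simpa using (hK s MeasurableSet.empty).2
  refine ciSup_le fun ⟨A, hA⟩ => ?_
  change |(μ₁.bind K).real A - (μ₂.bind K).real A| ≤ _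
  rw [K.measureReal_bind_eq_integral μ₁ hA, K.measureReal_bind_eq_integral μ₂ hA,
    ← add_sub_cancel_left (ε * ν.real A) (1 - ε)]
  exact abs_integral_sub_integral_le_mul_tvDist (by rw [measure_univ, measure_univ])
    (K.measurable_coe hA).ennreal_toReal (by linarith) fun s => hK s hA

/-- Doeblin minorization implies contraction in total variation: if
`K(s,A) ≥ ε·ν(A)` for all `s, A`, then `‖μ₁K − μ₂K‖_TV ≤ (1−ε)‖μ₁ − μ₂‖_TV`. -/
theorem doeblin_tv_contraction
    {M : Type*} [MeasurableSpace M] [StandardBorelSpace M]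
    (K : Kernel M M) [IsMarkovKernel K]
    (ε : ℝ) (hε : 0 < ε)
    (ν : Measure M) [IsProbabilityMeasure ν]
    (hdoeblin : ∀ s : M, ∀ A : Set M, MeasurableSet A →
      ENNReal.ofReal ε * ν A ≤ K s A)
    (μ₁ μ₂ : Measure M) [IsProbabilityMeasure μ₁] [IsProbabilityMeasure μ₂] :
    tvDist (μ₁.bind (fun s => K s)) (μ₂.bind (fun s => K s))
      ≤ (1 - ε) * tvDist μ₁ μ₂ :=
  doeblin_tv_contraction_general K ε hε ν hdoeblin μ₁ μ₂
end

section
/- Let K be a Markov kernel on a standard Borel space satisfying the Doeblin condition K(s,A) ≥ ε·ν(A) for all s, A, with 0 < ε ≤ 1. Then K admits a unique invariant probability measure μ, and for every initial probability measure μ₀ and every n, ‖μ₀Kⁿ − μ‖_TV ≤ (1 − ε)ⁿ. -/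
open MeasureTheory ProbabilityTheory

/-- `n`-fold application of a Markov kernel to an initial measure. -/
noncomputable def kernelIter {M : Type*} [MeasurableSpace M] (K : Kernel M M)
    (n : ℕ) (μ₀ : Measure M) : Measure M :=
  (fun m : Measure M => m.bind (fun s => K s))^[n] μ₀

/-!
Doeblin's condition splits `K s = η + R s` with `η = ε ν` independent of `s` and `R s` of mass
`1 - ε`. Unrolling the chain, `μ₀ Kⁿ = ∑_{k<n} η Rᵏ + μ₀ Rⁿ`: the sum does not depend on `μ₀`
and the remainder has mass `(1 - ε)ⁿ`, so any two initial laws are `(1 - ε)ⁿ`-close after `n`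
steps, which also forces uniqueness. The full series `∑ₖ η Rᵏ` is an invariant probability
measure.
-/

open scoped ENNReal

section

variable {M : Type*} [MeasurableSpace M]

lemma tvDist_le_of_forall {μ₁ μ₂ : Measure M} {r : ℝ}
    (h : ∀ A, MeasurableSet A → |(μ₁ A).toReal - (μ₂ A).toReal| ≤ r) : tvDist μ₁ μ₂ ≤ r :=
  have : Nonempty {A : Set M // MeasurableSet A} := ⟨⟨∅, .empty⟩⟩
  ciSup_le fun A => h A A.2

lemma kernelIter_succ (K : Kernel M M) (n : ℕ) (m : Measure M) :
    kernelIter K (n + 1) m = K ∘ₘ kernelIter K n m :=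
  Function.iterate_succ_apply' _ n m

lemma ProbabilityTheory.Kernel.Invariant.kernelIter_eq {K : Kernel M M} {μ : Measure M}
    (h : K.Invariant μ) (n : ℕ) : kernelIter K n μ = μ :=
  Function.iterate_fixed h.def n

lemma ProbabilityTheory.Kernel.exists_eq_const_add_of_le {K : Kernel M M} {η : Measure M}
    [IsFiniteMeasure η] (h : ∀ s, η ≤ K s) :
    ∃ R : Kernel M M, K = Kernel.const M η + R := by
  have hR : Measurable fun s => K s - η := by
    refine Measure.measurable_of_measurable_coe _ fun A hA => ?_
    simp_rw [Measure.sub_apply hA (h _)]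
    exact (K.measurable_coe hA).sub measurable_const
  refine ⟨⟨fun s => K s - η, hR⟩, Kernel.ext fun s => ?_⟩
  simp [add_comm η, Measure.sub_add_cancel_of_le (h s)]

instance isProbabilityMeasure_kernelIter (K : Kernel M M) [IsMarkovKernel K] (m : Measure M)
    [IsProbabilityMeasure m] (n : ℕ) :
    IsProbabilityMeasure (kernelIter K n m) := by
  induction n with
  | zero => assumption
  | succ n ih => rw [kernelIter_succ]; infer_instance

end

namespace Doeblin

variable {M : Type*} [MeasurableSpace M] {K R : Kernel M M} {η : Measure M}

lemma comp_eq_smul_add_comp (hKR : K = Kernel.const M η + R) (m : Measure M) :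
    K ∘ₘ m = m Set.univ • η + R ∘ₘ m := by
  rw [hKR, Measure.add_comp, Measure.const_comp]

lemma residual_apply_univ [IsMarkovKernel K] [IsFiniteMeasure η]
    (hKR : K = Kernel.const M η + R) (s : M) : R s Set.univ = 1 - η Set.univ := by
  have hK : K s Set.univ = η Set.univ + R s Set.univ := by simp [hKR]
  rw [measure_univ] at hK
  exact ENNReal.eq_sub_of_add_eq (measure_ne_top _ _) (by rw [add_comm, hK])

lemma kernelIter_residual_apply_univ [IsMarkovKernel K] [IsFiniteMeasure η]
    (hKR : K = Kernel.const M η + R) (m : Measure M) (n : ℕ) :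
    kernelIter R n m Set.univ = (1 - η Set.univ) ^ n * m Set.univ := by
  induction n with
  | zero => simp [kernelIter]
  | succ n ih =>
    rw [kernelIter_succ, Measure.bind_apply .univ R.aemeasurable,
      lintegral_congr fun s => residual_apply_univ hKR s, lintegral_const, ih, pow_succ,
      mul_comm _ (1 - η Set.univ), mul_assoc]

lemma exists_kernelIter_eq_add_kernelIter_residual [IsMarkovKernel K]
    (hKR : K = Kernel.const M η + R) (m₁ m₂ : Measure M) [IsProbabilityMeasure m₁]
    [IsProbabilityMeasure m₂] (n : ℕ) : ∃ S : Measure M, kernelIter K n m₁ = S + kernelIter R n m₁ ∧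
      kernelIter K n m₂ = S + kernelIter R n m₂ := by
  induction n with
  | zero => exact ⟨0, by simp [kernelIter], by simp [kernelIter]⟩
  | succ n ih =>
    obtain ⟨S, h₁, h₂⟩ := ih
    have step (m : Measure M) [IsProbabilityMeasure m]
        (h : kernelIter K n m = S + kernelIter R n m) :
        kernelIter K (n + 1) m = (η + R ∘ₘ S) + kernelIter R (n + 1) m := by
      rw [kernelIter_succ, comp_eq_smul_add_comp hKR, measure_univ, one_smul, h,
        Measure.comp_add, kernelIter_succ, add_assoc]
    exact ⟨η + R ∘ₘ S, step m₁ h₁, step m₂ h₂⟩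

lemma abs_kernelIter_apply_sub_le [IsMarkovKernel K] [IsFiniteMeasure η]
    (hKR : K = Kernel.const M η + R) (m₁ m₂ : Measure M) [IsProbabilityMeasure m₁]
    [IsProbabilityMeasure m₂] (n : ℕ) (A : Set M) :
    |(kernelIter K n m₁ A).toReal - (kernelIter K n m₂ A).toReal|
      ≤ ((1 - η Set.univ) ^ n).toReal := by
  obtain ⟨S, h₁, h₂⟩ := exists_kernelIter_eq_add_kernelIter_residual hKR m₁ m₂ n
  have hS : S A ≠ ∞ := by
    refine ne_top_of_le_ne_top (measure_ne_top (kernelIter K n m₁) A) ?_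
    rw [h₁, Measure.add_apply]
    exact le_self_add
  have hR (m : Measure M) [IsProbabilityMeasure m] : kernelIter R n m A ≤ (1 - η Set.univ) ^ n :=
    (measure_mono (Set.subset_univ A)).trans_eq
      (by rw [kernelIter_residual_apply_univ hKR, measure_univ (μ := m), mul_one])
  have hδ : (1 - η Set.univ) ^ n ≠ ∞ := ENNReal.pow_ne_top (ENNReal.sub_ne_top ENNReal.one_ne_top)
  rw [h₁, h₂, Measure.add_apply, Measure.add_apply,
    ENNReal.toReal_add hS (ne_top_of_le_ne_top hδ (hR m₁)),
    ENNReal.toReal_add hS (ne_top_of_le_ne_top hδ (hR m₂)), add_sub_add_left_eq_sub]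
  exact abs_sub_le_of_nonneg_of_le ENNReal.toReal_nonneg (ENNReal.toReal_mono hδ (hR m₁))
    ENNReal.toReal_nonneg (ENNReal.toReal_mono hδ (hR m₂))

lemma eq_of_invariant [IsMarkovKernel K] [IsFiniteMeasure η] (hKR : K = Kernel.const M η + R)
    (hη : η Set.univ ≠ 0) {μ₁ μ₂ : Measure M} [IsProbabilityMeasure μ₁] [IsProbabilityMeasure μ₂]
    (h₁ : K.Invariant μ₁) (h₂ : K.Invariant μ₂) : μ₁ = μ₂ := by
  ext A hA
  have hbound (n : ℕ) : |(μ₁ A).toReal - (μ₂ A).toReal| ≤ (1 - η Set.univ).toReal ^ n := by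
    simpa [h₁.kernelIter_eq, h₂.kernelIter_eq, ENNReal.toReal_pow] using
      abs_kernelIter_apply_sub_le hKR μ₁ μ₂ n A
  have hδ : (1 - η Set.univ).toReal < 1 := by
    simpa using (ENNReal.toReal_lt_toReal (ENNReal.sub_ne_top ENNReal.one_ne_top)
      ENNReal.one_ne_top).2 (ENNReal.sub_lt_self ENNReal.one_ne_top one_ne_zero hη)
  rw [← ENNReal.toReal_eq_toReal_iff' (measure_ne_top _ _) (measure_ne_top _ _),
    ← sub_eq_zero, ← abs_nonpos_iff]
  exact ge_of_tendsto' (tendsto_pow_atTop_nhds_zero_of_lt_one ENNReal.toReal_nonneg hδ) hbound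

/-- Decomposing `K = η + R`, the stationary chain last drew from `η` some `k` steps ago and then
moved by `R`; summing over `k` gives `μ = ∑ₖ η Rᵏ`. -/
noncomputable def regenerationMeasure (R : Kernel M M) (η : Measure M) : Measure M :=
  Measure.sum fun k => kernelIter R k η

lemma regenerationMeasure_apply_univ [IsMarkovKernel K] [IsFiniteMeasure η]
    (hKR : K = Kernel.const M η + R) (hη : η Set.univ ≠ 0) :
    regenerationMeasure R η Set.univ = 1 := by
  obtain ⟨s⟩ := nonempty_of_measure_ne_zero hη
  have hη₁ : η Set.univ ≤ 1 :=
    calc η Set.univ ≤ η Set.univ + R s Set.univ := le_self_add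
      _ = K s Set.univ := by simp [hKR]
      _ = 1 := measure_univ
  simp_rw [regenerationMeasure, Measure.sum_apply _ .univ, kernelIter_residual_apply_univ hKR,
    ENNReal.tsum_mul_right, ENNReal.tsum_geometric, ENNReal.sub_sub_cancel ENNReal.one_ne_top hη₁,
    ENNReal.inv_mul_cancel hη (measure_ne_top _ _)]

lemma invariant_regenerationMeasure [IsMarkovKernel K] [IsFiniteMeasure η]
    (hKR : K = Kernel.const M η + R) (hη : η Set.univ ≠ 0) :
    K.Invariant (regenerationMeasure R η) := by
  rw [Kernel.Invariant, comp_eq_smul_add_comp hKR,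
    regenerationMeasure_apply_univ hKR hη, one_smul, regenerationMeasure,
    Measure.bind_sum _ _ R.aemeasurable]
  ext A hA
  simp_rw [Measure.add_apply, Measure.sum_apply _ hA, ← kernelIter_succ]
  exact (tsum_eq_zero_add' (f := fun k => kernelIter R k η A) ENNReal.summable).symm

end Doeblin

theorem doeblin_unique_invariant_measure_general
    {M : Type*} [MeasurableSpace M]
    (K : Kernel M M) [IsMarkovKernel K]
    (ε : ℝ) (hε0 : 0 < ε) (hε1 : ε ≤ 1)
    (ν : Measure M) [IsProbabilityMeasure ν]
    (hdoeblin : ∀ s : M, ∀ A : Set M, MeasurableSet A →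
      ENNReal.ofReal ε * ν A ≤ K s A) :
    ∃ μ : Measure M, IsProbabilityMeasure μ ∧ μ.bind (fun s => K s) = μ ∧
      (∀ μ' : Measure M, IsProbabilityMeasure μ' →
        μ'.bind (fun s => K s) = μ' → μ' = μ) ∧
      (∀ μ₀ : Measure M, IsProbabilityMeasure μ₀ → ∀ n : ℕ,
        tvDist (kernelIter K n μ₀) μ ≤ (1 - ε) ^ n) := by
  have : IsFiniteMeasure (ENNReal.ofReal ε • ν) := ⟨by simp⟩
  obtain ⟨R, hKR⟩ := K.exists_eq_const_add_of_le (η := ENNReal.ofReal ε • ν) fun s =>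
    Measure.le_iff.2 fun A hA => by simpa using hdoeblin s A hA
  set η := ENNReal.ofReal ε • ν
  have hη : η Set.univ = ENNReal.ofReal ε := by simp [η]
  have hη0 : η Set.univ ≠ 0 := by simpa [hη] using hε0
  have hδ (n : ℕ) : ((1 - η Set.univ) ^ n).toReal = (1 - ε) ^ n := by
    rw [hη, ← ENNReal.ofReal_one, ← ENNReal.ofReal_sub _ hε0.le, ← ENNReal.ofReal_pow (by linarith),
      ENNReal.toReal_ofReal (pow_nonneg (by linarith) n)]
  have hμ : IsProbabilityMeasure (Doeblin.regenerationMeasure R η) :=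
    ⟨Doeblin.regenerationMeasure_apply_univ hKR hη0⟩
  have hinv := Doeblin.invariant_regenerationMeasure hKR hη0
  refine ⟨_, hμ, hinv, fun μ' _ hμ' => Doeblin.eq_of_invariant hKR hη0 hμ' hinv,
    fun μ₀ _ n => tvDist_le_of_forall fun A _ => ?_⟩
  rw [← hinv.kernelIter_eq n, ← hδ]
  exact Doeblin.abs_kernelIter_apply_sub_le hKR μ₀ _ n A

/-- Under the Doeblin condition, a Markov kernel has a unique invariant probability
measure `μ`, and `‖μ₀Kⁿ − μ‖_TV ≤ (1−ε)ⁿ` for every initial law `μ₀`. -/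
theorem doeblin_unique_invariant_measure
    {M : Type*} [MeasurableSpace M] [StandardBorelSpace M]
    (K : Kernel M M) [IsMarkovKernel K]
    (ε : ℝ) (hε0 : 0 < ε) (hε1 : ε ≤ 1)
    (ν : Measure M) [IsProbabilityMeasure ν]
    (hdoeblin : ∀ s : M, ∀ A : Set M, MeasurableSet A →
      ENNReal.ofReal ε * ν A ≤ K s A) :
    ∃ μ : Measure M, IsProbabilityMeasure μ ∧ μ.bind (fun s => K s) = μ ∧
      (∀ μ' : Measure M, IsProbabilityMeasure μ' →
        μ'.bind (fun s => K s) = μ' → μ' = μ) ∧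
      (∀ μ₀ : Measure M, IsProbabilityMeasure μ₀ → ∀ n : ℕ,
        tvDist (kernelIter K n μ₀) μ ≤ (1 - ε) ^ n) :=
  doeblin_unique_invariant_measure_general K ε hε0 hε1 ν hdoeblin
end
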